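/- Let W be symmetric positive definite, λ ∈ (0,1], M n×n symmetric positive definite, R m×m symmetric positive definite, C an m×n matrix, and T an m×m symmetric matrix. Suppose X̄ is a symmetric positive definite matrix with X̄ = g_{λ,W}(X̄) and for every symmetric positive semidefinite X the iterates g_{λ,W}^k(X) converge to X̄ as k → ∞. Then (X̄ ≤ M and C X̄ Cᵀ + R ≤ T) holds if and only if there exists a symmetric matrix X with 0 < X ≤ M, g_{λ,W}(X) ≤ X, and C X Cᵀ + R ≤ T. (Constraint equivalence in the proof of Theorem 4, Appendix G.) -/

import Mathlib

open Matrix Filter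

/-- The modified Riccati operator
`g_{θ,W}(X) = A X Aᵀ + Q − θ A X Cᵀ (C X Cᵀ + W)⁻¹ C X Aᵀ`. -/
noncomputable def gRic {n m : ℕ} (A Q : Matrix (Fin n) (Fin n) ℝ)
    (C : Matrix (Fin m) (Fin n) ℝ) (W : Matrix (Fin m) (Fin m) ℝ) (θ : ℝ)
    (X : Matrix (Fin n) (Fin n) ℝ) : Matrix (Fin n) (Fin n) ℝ :=
  A * X * Aᵀ + Q - θ • (A * X * Cᵀ * (C * X * Cᵀ + W)⁻¹ * (C * X * Aᵀ))

/-!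
Completing the square in the gain exhibits `g_{θ,W}` as the pointwise minimum over gains `K` of
the maps `gRicWithGain … K`, each monotone for `θ ∈ [0, 1]`; hence `g_{θ,W}` is monotone on the
positive semidefinite cone. If `g(X) ≤ X`, every iterate `gᵏ(X)` therefore stays below `X`, and
since the iterates converge to `X̄` and the Loewner order is closed, `X̄ ≤ X`, which transfers both
constraints from `X` to `X̄`. Conversely `X̄` itself is feasible.
-/

open scoped MatrixOrder

namespace Matrix

variable {ι κ : Type*} [Fintype ι] [Fintype κ]

theorem PosSemidef.mul_mul_transpose_same {D : Matrix ι ι ℝ} (hD : D.PosSemidef)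
    (B : Matrix κ ι ℝ) : (B * D * Bᵀ).PosSemidef := by
  simpa only [conjTranspose_eq_transpose_of_trivial] using hD.mul_mul_conjTranspose_same B

theorem PosSemidef.mul_mul_transpose_add_posDef {X : Matrix ι ι ℝ} (hX : X.PosSemidef)
    (C : Matrix κ ι ℝ) {W : Matrix κ κ ℝ} (hW : W.PosDef) : (C * X * Cᵀ + W).PosDef :=
  PosDef.posSemidef_add (hX.mul_mul_transpose_same C) hW

theorem mul_mul_transpose_le_mul_mul_transpose {X Y : Matrix ι ι ℝ} (h : X ≤ Y)
    (B : Matrix κ ι ℝ) : B * X * Bᵀ ≤ B * Y * Bᵀ := by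
  rw [le_iff, ← Matrix.sub_mul, ← Matrix.mul_sub]
  exact (le_iff.mp h).mul_mul_transpose_same B

theorem isClosed_setOf_posSemidef : IsClosed {A : Matrix ι ι ℝ | A.PosSemidef} := by
  simp only [posSemidef_iff_dotProduct_mulVec, Set.ofPred_and, Set.ofPred_forall]
  refine (isClosed_eq continuous_id.matrix_conjTranspose continuous_id).inter
    (isClosed_iInter fun x => isClosed_le continuous_const ?_)
  fun_prop

instance : OrderClosedTopology (Matrix ι ι ℝ) where
  isClosed_le' := isClosed_setOf_posSemidef.preimage (continuous_snd.sub continuous_fst)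

theorem completing_square {R : Type*} [CommRing R]
    (A X : Matrix ι ι R) (C : Matrix κ ι R) (W S : Matrix κ κ R) (K L : Matrix ι κ R)
    (hL : A * X * Cᵀ = L * S) (hLT : C * X * Aᵀ = S * Lᵀ) (hS : C * X * Cᵀ = S - W) :
    (A - K * C) * X * (A - K * C)ᵀ + K * W * Kᵀ =
      A * X * Aᵀ - L * S * Lᵀ + (K - L) * S * (K - L)ᵀ := by
  have expand : (A - K * C) * X * (A - K * C)ᵀ =
      A * X * Aᵀ - A * X * Cᵀ * Kᵀ - K * (C * X * Aᵀ) + K * (C * X * Cᵀ) * Kᵀ := by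
    simp only [transpose_sub, transpose_mul, Matrix.sub_mul, Matrix.mul_sub, Matrix.mul_assoc]
    abel
  rw [expand, hL, hLT, hS]
  simp only [transpose_sub, Matrix.sub_mul, Matrix.mul_sub, Matrix.mul_assoc]
  abel

end Matrix

section Riccati

variable {n m : ℕ} {A Q : Matrix (Fin n) (Fin n) ℝ} {C : Matrix (Fin m) (Fin n) ℝ}
  {W : Matrix (Fin m) (Fin m) ℝ} {θ : ℝ}

/-- The error-covariance update of a Kalman filter whose measurements arrive with probability `θ`,
run with an arbitrary gain `K`. -/
noncomputable def gRicWithGain (A Q : Matrix (Fin n) (Fin n) ℝ) (C : Matrix (Fin m) (Fin n) ℝ)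
    (W : Matrix (Fin m) (Fin m) ℝ) (θ : ℝ) (K : Matrix (Fin n) (Fin m) ℝ)
    (X : Matrix (Fin n) (Fin n) ℝ) : Matrix (Fin n) (Fin n) ℝ :=
  (1 - θ) • (A * X * Aᵀ + Q) + θ • ((A - K * C) * X * (A - K * C)ᵀ + K * W * Kᵀ + Q)

noncomputable def optGain (A : Matrix (Fin n) (Fin n) ℝ) (C : Matrix (Fin m) (Fin n) ℝ)
    (W : Matrix (Fin m) (Fin m) ℝ) (X : Matrix (Fin n) (Fin n) ℝ) : Matrix (Fin n) (Fin m) ℝ :=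
  A * X * Cᵀ * (C * X * Cᵀ + W)⁻¹

theorem gRicWithGain_eq_gRic_add {X : Matrix (Fin n) (Fin n) ℝ} (hX : X.IsHermitian)
    (hS : (C * X * Cᵀ + W).PosDef) (K : Matrix (Fin n) (Fin m) ℝ) :
    gRicWithGain A Q C W θ K X = gRic A Q C W θ X +
      θ • ((K - optGain A C W X) * (C * X * Cᵀ + W) * (K - optGain A C W X)ᵀ) := by
  set S := C * X * Cᵀ + W
  set L := optGain A C W X
  have hL : A * X * Cᵀ = L * S :=
    (nonsing_inv_mul_cancel_right _ _ ((isUnit_iff_isUnit_det S).mp hS.isUnit)).symm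
  have hLT : C * X * Aᵀ = S * Lᵀ := by
    have hXT : Xᵀ = X := (isHermitian_iff_isSymm.mp hX).eq
    have hST : Sᵀ = S := (isHermitian_iff_isSymm.mp hS.isHermitian).eq
    simpa only [transpose_mul, transpose_transpose, hXT, hST, Matrix.mul_assoc]
      using congrArg transpose hL
  have hL_def : A * X * Cᵀ * S⁻¹ = L := rfl
  rw [gRicWithGain, gRic, hL_def, hLT,
    completing_square A X C W S K L hL hLT (add_sub_cancel_right _ _).symm, Matrix.mul_assoc L]
  module

theorem gRic_le_gRicWithGain (hW : W.PosDef) (hθ : 0 ≤ θ) {X : Matrix (Fin n) (Fin n) ℝ}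
    (hX : X.PosSemidef) (K : Matrix (Fin n) (Fin m) ℝ) :
    gRic A Q C W θ X ≤ gRicWithGain A Q C W θ K X := by
  have hS := hX.mul_mul_transpose_add_posDef C hW
  rw [gRicWithGain_eq_gRic_add hX.isHermitian hS K, le_iff, add_sub_cancel_left]
  exact (hS.posSemidef.mul_mul_transpose_same _).smul hθ

theorem gRic_eq_gRicWithGain_optGain (hW : W.PosDef) {X : Matrix (Fin n) (Fin n) ℝ}
    (hX : X.PosSemidef) : gRic A Q C W θ X = gRicWithGain A Q C W θ (optGain A C W X) X := by
  simp [gRicWithGain_eq_gRic_add hX.isHermitian (hX.mul_mul_transpose_add_posDef C hW)]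

theorem gRicWithGain_mono (hθ₀ : 0 ≤ θ) (hθ₁ : θ ≤ 1) (K : Matrix (Fin n) (Fin m) ℝ) :
    Monotone (gRicWithGain A Q C W θ K) := by
  intro X Y hXY
  unfold gRicWithGain
  gcongr <;> exact mul_mul_transpose_le_mul_mul_transpose hXY _

theorem posSemidef_gRic (hQ : Q.PosSemidef) (hW : W.PosDef) (hθ₀ : 0 ≤ θ) (hθ₁ : θ ≤ 1)
    {X : Matrix (Fin n) (Fin n) ℝ} (hX : X.PosSemidef) : (gRic A Q C W θ X).PosSemidef := by
  rw [gRic_eq_gRicWithGain_optGain hW hX]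
  refine PosSemidef.add (PosSemidef.smul ?_ (sub_nonneg.2 hθ₁)) (PosSemidef.smul ?_ hθ₀)
  · exact (hX.mul_mul_transpose_same A).add hQ
  · exact ((hX.mul_mul_transpose_same _).add (hW.posSemidef.mul_mul_transpose_same _)).add hQ

theorem gRic_mono (hW : W.PosDef) (hθ₀ : 0 ≤ θ) (hθ₁ : θ ≤ 1) {X Y : Matrix (Fin n) (Fin n) ℝ}
    (hX : X.PosSemidef) (hXY : X ≤ Y) : gRic A Q C W θ X ≤ gRic A Q C W θ Y := by
  have hY : Y.PosSemidef := (hX.nonneg.trans hXY).posSemidef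
  calc gRic A Q C W θ X ≤ gRicWithGain A Q C W θ (optGain A C W Y) X :=
        gRic_le_gRicWithGain hW hθ₀ hX _
    _ ≤ gRicWithGain A Q C W θ (optGain A C W Y) Y := gRicWithGain_mono hθ₀ hθ₁ _ hXY
    _ = gRic A Q C W θ Y := (gRic_eq_gRicWithGain_optGain hW hY).symm

theorem posSemidef_gRic_iterate (hQ : Q.PosSemidef) (hW : W.PosDef) (hθ₀ : 0 ≤ θ) (hθ₁ : θ ≤ 1)
    {X : Matrix (Fin n) (Fin n) ℝ} (hX : X.PosSemidef) (k : ℕ) :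
    ((gRic A Q C W θ)^[k] X).PosSemidef := by
  induction k with
  | zero => exact hX
  | succ k ih =>
    rw [Function.iterate_succ_apply']
    exact posSemidef_gRic hQ hW hθ₀ hθ₁ ih

theorem gRic_iterate_le (hQ : Q.PosSemidef) (hW : W.PosDef) (hθ₀ : 0 ≤ θ) (hθ₁ : θ ≤ 1)
    {X : Matrix (Fin n) (Fin n) ℝ} (hX : X.PosSemidef) (hgX : gRic A Q C W θ X ≤ X) (k : ℕ) :
    (gRic A Q C W θ)^[k] X ≤ X := by
  induction k with
  | zero => exact le_rfl
  | succ k ih =>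
    rw [Function.iterate_succ_apply']
    exact (gRic_mono hW hθ₀ hθ₁ (posSemidef_gRic_iterate hQ hW hθ₀ hθ₁ hX k) ih).trans hgX

end Riccati

theorem fixed_point_feasibility_with_T_general {n m : ℕ}
    (A Q : Matrix (Fin n) (Fin n) ℝ) (C : Matrix (Fin m) (Fin n) ℝ)
    (W : Matrix (Fin m) (Fin m) ℝ) (lam : ℝ)
    (hQ : Q.PosSemidef) (hW : W.PosDef) (hlam : lam ∈ Set.Ioc (0 : ℝ) 1)
    (M : Matrix (Fin n) (Fin n) ℝ)
    (R : Matrix (Fin m) (Fin m) ℝ)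
    (T : Matrix (Fin m) (Fin m) ℝ)
    (Xb : Matrix (Fin n) (Fin n) ℝ) (hXb : Xb.PosDef)
    (hfix : Xb = gRic A Q C W lam Xb)
    (hconv : ∀ X : Matrix (Fin n) (Fin n) ℝ, X.PosSemidef →
      Tendsto (fun k => (gRic A Q C W lam)^[k] X) atTop (nhds Xb)) :
    ((M - Xb).PosSemidef ∧ (T - (C * Xb * Cᵀ + R)).PosSemidef) ↔
      ∃ X : Matrix (Fin n) (Fin n) ℝ, X.PosDef ∧ (M - X).PosSemidef ∧
        (X - gRic A Q C W lam X).PosSemidef ∧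
        (T - (C * X * Cᵀ + R)).PosSemidef := by
  constructor
  · rintro ⟨hXbM, hXbT⟩
    exact ⟨Xb, hXb, hXbM, hfix.symm.le, hXbT⟩
  · rintro ⟨X, hX, hXM, hgX, hXT⟩
    have hXbX : Xb ≤ X := le_of_tendsto' (hconv X hX.posSemidef)
      (gRic_iterate_le hQ hW hlam.1.le hlam.2 hX.posSemidef hgX)
    exact ⟨hXbX.trans hXM,
      (add_le_add_left (mul_mul_transpose_le_mul_mul_transpose hXbX C) R).trans hXT⟩

/-- Constraint equivalence in the proof of Theorem 4 (Appendix G):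
`(X̄ ≤ M and C X̄ Cᵀ + R ≤ T)` iff there exists `0 < X ≤ M` with
`g_{λ,W}(X) ≤ X` and `C X Cᵀ + R ≤ T`. -/
theorem fixed_point_feasibility_with_T {n m : ℕ}
    (A Q : Matrix (Fin n) (Fin n) ℝ) (C : Matrix (Fin m) (Fin n) ℝ)
    (W : Matrix (Fin m) (Fin m) ℝ) (lam : ℝ)
    (hQ : Q.PosSemidef) (hW : W.PosDef) (hlam : lam ∈ Set.Ioc (0 : ℝ) 1)
    (M : Matrix (Fin n) (Fin n) ℝ) (hM : M.PosDef)
    (R : Matrix (Fin m) (Fin m) ℝ) (hR : R.PosDef)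
    (T : Matrix (Fin m) (Fin m) ℝ) (hT : T.IsHermitian)
    (Xb : Matrix (Fin n) (Fin n) ℝ) (hXb : Xb.PosDef)
    (hfix : Xb = gRic A Q C W lam Xb)
    (hconv : ∀ X : Matrix (Fin n) (Fin n) ℝ, X.PosSemidef →
      Tendsto (fun k => (gRic A Q C W lam)^[k] X) atTop (nhds Xb)) :
    ((M - Xb).PosSemidef ∧ (T - (C * Xb * Cᵀ + R)).PosSemidef) ↔
      ∃ X : Matrix (Fin n) (Fin n) ℝ, X.PosDef ∧ (M - X).PosSemidef ∧
        (X - gRic A Q C W lam X).PosSemidef ∧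
        (T - (C * X * Cᵀ + R)).PosSemidef :=
  fixed_point_feasibility_with_T_general A Q C W lam hQ hW hlam M R T Xb hXb hfix hconv
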